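/- arXiv:1603.01859 — 2 statements merged into one kernel-verified Lean document; each statement's English description precedes it below -/
import Mathlib

section
/- Let G be a finite group of order 4t, let ρ be a normalized binary cocycle over G, and let S ⊆ G∖{1} be any subset (indexing the coboundaries of a basis of cocycles). In ℚ[x_d : d ∈ S], let J be the ideal generated by: (i) x_d² − x_d for all d ∈ S, and (ii) for each g ∈ G∖{1}, the polynomial S_g(X) = Σ_{h∈G} ρ(g,h) · ∏_{d ∈ S ∩ {h, g·h}} (1 − 2x_d). Then a point a : S → ℚ lies in the affine variety V(J) if and only if a_d ∈ {0,1} for every d ∈ S and the cocyclic matrix of the cocycle ψ(g,h) = ρ(g,h) · ∏_{d∈S} ∂_d(g,h)^{a_d} is Hadamard. -/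
/-!
For a normalized `±1` cocycle `ψ`, the cocycle identity at `(g g'⁻¹, g', h)` gives
`ψ(g,h) ψ(g',h) = ψ(g g'⁻¹, g') ψ(g g'⁻¹, g' h)`, so the inner product of rows `g ≠ g'` of `M_ψ` is
`±` the row sum of `g g'⁻¹`: `M_ψ` is Hadamard iff every row other than row `1` sums to zero.
The twist `ψ = ρ · ∏ ∂_d^{a_d}` is again a normalized `±1` cocycle. On a `0/1` point each factor
`1 - 2 x_d` of `S_g` becomes `δ_d(h) δ_d(g h)` (as `h ≠ g h`), so `S_g(a)` is the `g`-th row sum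
of `M_ψ` up to the sign `∏ δ_d(g)^{a_d}`. The equations `x_d² = x_d` force the point to be `0/1`.
-/

open Matrix MvPolynomial

/-- The characteristic map `δ_d`. -/
def charMap {G : Type*} [DecidableEq G] (d x : G) : ℤ := if x = d then -1 else 1

/-- The elementary coboundary `∂_d`. -/
def elemCob {G : Type*} [Group G] [DecidableEq G] (d g h : G) : ℤ :=
  charMap d g * charMap d h * charMap d (g * h)

/-- The polynomial `S_g(X) = Σ_{h∈G} ρ(g,h) · ∏_{d ∈ S ∩ {h, g·h}} (1 - 2x_d)`. -/
noncomputable def rowPoly {G : Type*} [Group G] [Fintype G] [DecidableEq G]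
    (ρ : G → G → ℤ) (S : Finset G) (g : G) : MvPolynomial {d : G // d ∈ S} ℚ :=
  ∑ h : G, MvPolynomial.C ((ρ g h : ℤ) : ℚ) *
    ∏ d : {d : G // d ∈ S},
      if (d : G) = h ∨ (d : G) = g * h then (1 - 2 * MvPolynomial.X d) else 1

/-- The ideal `J_G` of Theorem 3 (built from coboundaries indexed by `S`). -/
noncomputable def cocycleIdeal {G : Type*} [Group G] [Fintype G] [DecidableEq G]
    (ρ : G → G → ℤ) (S : Finset G) : Ideal (MvPolynomial {d : G // d ∈ S} ℚ) :=
  Ideal.span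
    ({p | ∃ d : {d : G // d ∈ S}, p = MvPolynomial.X d ^ 2 - MvPolynomial.X d} ∪
     {p | ∃ g : G, g ≠ 1 ∧ p = rowPoly ρ S g})

section Cocycle

variable {G M : Type*}

def IsCocycle [Mul G] [Mul M] (ψ : G → G → M) : Prop :=
  ∀ g h k, ψ g h * ψ (g * h) k = ψ h k * ψ g (h * k)

theorem isCocycle_one [Mul G] [MulOneClass M] : IsCocycle (fun _ _ : G => (1 : M)) :=
  fun _ _ _ => rfl

theorem IsCocycle.mul [Mul G] [CommMonoid M] {ψ φ : G → G → M} (hψ : IsCocycle ψ)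
    (hφ : IsCocycle φ) : IsCocycle (fun g h => ψ g h * φ g h) := by
  intro g h k
  rw [mul_mul_mul_comm, hψ, hφ, mul_mul_mul_comm]

theorem IsCocycle.finset_prod [Mul G] [CommMonoid M] {ι : Type*} {s : Finset ι}
    {ψ : ι → G → G → M} (hψ : ∀ i ∈ s, IsCocycle (ψ i)) :
    IsCocycle (fun g h => ∏ i ∈ s, ψ i g h) := by
  intro g h k
  simp only [← Finset.prod_mul_distrib]
  exact Finset.prod_congr rfl fun i hi => hψ i hi g h k

variable [Group G] [CommRing M] {ψ : G → G → M}

theorem IsCocycle.mul_mul_eq (hψ : IsCocycle ψ) (hsq : ∀ g h, ψ g h ^ 2 = 1) (g g' h : G) :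
    ψ g h * ψ g' h = ψ (g * g'⁻¹) g' * ψ (g * g'⁻¹) (g' * h) := by
  have hcoc := hψ (g * g'⁻¹) g' h
  rw [inv_mul_cancel_right] at hcoc
  linear_combination (ψ (g * g'⁻¹) g' * ψ g' h) * hcoc - (ψ g h * ψ g' h) * hsq (g * g'⁻¹) g' +
    (ψ (g * g'⁻¹) g' * ψ (g * g'⁻¹) (g' * h)) * hsq g' h

variable [Fintype G]

theorem IsCocycle.sum_mul_eq (hψ : IsCocycle ψ) (hsq : ∀ g h, ψ g h ^ 2 = 1) (g g' : G) :
    ∑ h, ψ g h * ψ g' h = ψ (g * g'⁻¹) g' * ∑ h, ψ (g * g'⁻¹) h := by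
  simp only [hψ.mul_mul_eq hsq g g', ← Finset.mul_sum]
  congr 1
  exact Fintype.sum_bijective (g' * ·) (Group.mulLeft_bijective g') _ _ fun _ => rfl

theorem IsCocycle.mul_transpose_eq_card_smul_one_iff [DecidableEq G] (hψ : IsCocycle ψ)
    (hsq : ∀ g h, ψ g h ^ 2 = 1) (hone : ∀ g, ψ 1 g = 1) :
    of ψ * (of ψ)ᵀ = (Fintype.card G : M) • (1 : Matrix G G M) ↔
      ∀ g ≠ 1, ∑ h, ψ g h = 0 := by
  simp only [← Matrix.ext_iff, Matrix.mul_apply, Matrix.transpose_apply, Matrix.of_apply,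
    Matrix.smul_apply, Matrix.one_apply, smul_eq_mul, mul_ite, mul_one, mul_zero]
  constructor
  · intro H g hg
    simpa [hone, hg] using H g 1
  · intro H i j
    split_ifs with hij
    · simp [hij, ← sq, hsq]
    · rw [hψ.sum_mul_eq hsq, H _ (mul_inv_eq_one.not.mpr hij), mul_zero]

end Cocycle

section Coboundary

variable {G : Type*} [DecidableEq G]

theorem charMap_sq (d x : G) : charMap d x ^ 2 = 1 := by
  unfold charMap; split_ifs <;> norm_num

variable [Group G]

theorem elemCob_sq (d g h : G) : elemCob d g h ^ 2 = 1 := by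
  simp only [elemCob, mul_pow, charMap_sq, mul_one]

theorem isCocycle_elemCob (d : G) : IsCocycle (elemCob d) := by
  intro g h k
  simp only [elemCob, charMap, mul_assoc]
  split_ifs <;> ring

theorem elemCob_one_left {d : G} (hd : d ≠ 1) (g : G) : elemCob d 1 g = 1 := by
  have h1 : charMap d 1 = 1 := if_neg hd.symm
  rw [elemCob, h1, one_mul, one_mul, ← sq, charMap_sq]

end Coboundary

section Twist

variable {G : Type*} [Group G] [DecidableEq G]
  (ρ : G → G → ℤ) (S : Finset G) (a : {d : G // d ∈ S} → ℚ)

def twistedCocycle (g h : G) : ℤ :=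
  ρ g h * ∏ d : {d : G // d ∈ S}, if a d = 1 then elemCob (d : G) g h else 1

variable {ρ S}

theorem IsCocycle.twistedCocycle (hρ : IsCocycle ρ) : IsCocycle (twistedCocycle ρ S a) := by
  refine hρ.mul (IsCocycle.finset_prod fun d _ => ?_)
  by_cases hd : a d = 1 <;> simp only [hd, ↓reduceIte]
  exacts [isCocycle_elemCob _, isCocycle_one]

theorem twistedCocycle_sq (hρ : ∀ g h, ρ g h ^ 2 = 1) (g h : G) :
    twistedCocycle ρ S a g h ^ 2 = 1 := by
  simp only [twistedCocycle, mul_pow, ← Finset.prod_pow, hρ, apply_ite (· ^ 2), elemCob_sq,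
    one_pow, ite_self, Finset.prod_const_one, mul_one]

theorem twistedCocycle_one_left (hρ : ∀ g, ρ 1 g = 1) (hS : (1 : G) ∉ S) (g : G) :
    twistedCocycle ρ S a 1 g = 1 := by
  have hd (d : {d : G // d ∈ S}) : (d : G) ≠ 1 := fun e => hS (e ▸ d.2)
  simp [twistedCocycle, hρ, elemCob_one_left (hd _)]

end Twist

theorem ite_eq_charMap_mul_charMap {G : Type*} [Group G] [DecidableEq G] {g : G} (hg : g ≠ 1)
    (d h : G) {x : ℚ} (hx : x = 0 ∨ x = 1) :
    (if d = h ∨ d = g * h then 1 - 2 * x else 1) =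
      ((if x = 1 then charMap d h * charMap d (g * h) else 1 : ℤ) : ℚ) := by
  have hgh : g * h ≠ h := fun e => hg (mul_eq_right.mp e)
  rcases hx with rfl | rfl
  · simp
  · simp only [charMap, if_true]
    split_ifs <;> grind

section RowPoly

variable {G : Type*} [Group G] [Fintype G] [DecidableEq G]
  {ρ : G → G → ℤ} {S : Finset G} {a : {d : G // d ∈ S} → ℚ}

theorem eval_rowPoly (ha : ∀ d, a d = 0 ∨ a d = 1) {g : G} (hg : g ≠ 1) :
    eval a (rowPoly ρ S g) = ((∑ h, ρ g h *
      ∏ d : {d : G // d ∈ S}, if a d = 1 then charMap (d : G) h * charMap (d : G) (g * h)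
        else 1 : ℤ) : ℚ) := by
  simp only [rowPoly, map_sum, map_mul, map_prod, eval_C, apply_ite (eval a), map_sub, map_one,
    eval_X, map_ofNat, ite_eq_charMap_mul_charMap hg _ _ (ha _), Int.cast_sum, Int.cast_mul,
    Int.cast_prod]

theorem sum_twistedCocycle (g : G) :
    ∑ h, twistedCocycle ρ S a g h =
      (∏ d : {d : G // d ∈ S}, if a d = 1 then charMap (d : G) g else 1) *
      ∑ h, ρ g h * ∏ d : {d : G // d ∈ S},
        if a d = 1 then charMap (d : G) h * charMap (d : G) (g * h) else 1 := by
  simp only [twistedCocycle, elemCob, mul_assoc, ite_mul_one, Finset.prod_mul_distrib,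
    Finset.mul_sum]
  exact Finset.sum_congr rfl fun h _ => by ring

theorem eval_rowPoly_eq_zero_iff (ha : ∀ d, a d = 0 ∨ a d = 1) {g : G} (hg : g ≠ 1) :
    eval a (rowPoly ρ S g) = 0 ↔ ∑ h, twistedCocycle ρ S a g h = 0 := by
  have hc : (∏ d : {d : G // d ∈ S}, if a d = 1 then charMap (d : G) g else 1) ≠ 0 :=
    Finset.prod_ne_zero_iff.mpr fun d _ => by
      unfold charMap
      split_ifs <;> norm_num
  rw [eval_rowPoly ha hg, sum_twistedCocycle, mul_eq_zero, or_iff_right hc, Int.cast_eq_zero]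

end RowPoly

theorem forall_mem_cocycleIdeal_eval_eq_zero_iff {G : Type*} [Group G] [Fintype G]
    [DecidableEq G] (ρ : G → G → ℤ) (S : Finset G) (a : {d : G // d ∈ S} → ℚ) :
    (∀ p ∈ cocycleIdeal ρ S, eval a p = 0) ↔
      (∀ d, a d = 0 ∨ a d = 1) ∧ ∀ g ≠ 1, eval a (rowPoly ρ S g) = 0 := by
  have hX (d : {d : G // d ∈ S}) : eval a (X d ^ 2 - X d) = 0 ↔ a d = 0 ∨ a d = 1 := by
    rw [map_sub, map_pow, eval_X, sub_eq_zero, sq]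
    exact IsIdempotentElem.iff_eq_zero_or_one
  change cocycleIdeal ρ S ≤ RingHom.ker (eval a) ↔ _
  rw [cocycleIdeal, Ideal.span_le, Set.union_subset_iff]
  refine and_congr ⟨fun h d => (hX d).mp (h ⟨d, rfl⟩), ?_⟩ ⟨fun h g hg => h ⟨g, hg, rfl⟩, ?_⟩
  · rintro h _ ⟨d, rfl⟩
    exact (hX d).mpr (h d)
  · rintro h _ ⟨g, hg, rfl⟩
    exact h g hg

/-- a point lies in `V(J)` iff it is a `{0,1}`-tuple such that the
corresponding cocyclic matrix `M_ψ`, `ψ = ρ·∏_{d∈S} ∂_d^{a_d}`, is Hadamard. -/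
theorem mem_variety_cocycleIdeal_iff {G : Type*} [Group G] [Fintype G] [DecidableEq G]
    (t : ℕ) (hcard : Fintype.card G = 4 * t)
    (ρ : G → G → ℤ)
    (hpm : ∀ g h : G, ρ g h = 1 ∨ ρ g h = -1)
    (hcoc : ∀ g h k : G, ρ g h * ρ (g * h) k = ρ h k * ρ g (h * k))
    (hnorm : ∀ g : G, ρ 1 g = 1 ∧ ρ g 1 = 1)
    (S : Finset G) (hS : (1 : G) ∉ S)
    (a : {d : G // d ∈ S} → ℚ) :
    (∀ p ∈ cocycleIdeal ρ S, eval a p = 0) ↔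
      (∀ d, a d = 0 ∨ a d = 1) ∧
      (Matrix.of fun g h : G =>
            ρ g h * ∏ d : {d : G // d ∈ S}, (if a d = 1 then elemCob (d : G) g h else 1)) *
          (Matrix.of fun g h : G =>
            ρ g h * ∏ d : {d : G // d ∈ S}, (if a d = 1 then elemCob (d : G) g h else 1))ᵀ =
        (4 * t : ℤ) • (1 : Matrix G G ℤ) := by
  have hψ : IsCocycle (twistedCocycle ρ S a) := IsCocycle.twistedCocycle a hcoc
  have hsq := twistedCocycle_sq a fun g h => sq_eq_one_iff.mpr (hpm g h)
  have hone := twistedCocycle_one_left a (fun g => (hnorm g).1) hS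
  have hn : (4 * t : ℤ) = Fintype.card G := by simp [hcard]
  change _ ↔ _ ∧ of (twistedCocycle ρ S a) * (of (twistedCocycle ρ S a))ᵀ = _
  rw [forall_mem_cocycleIdeal_eval_eq_zero_iff, hn, hψ.mul_transpose_eq_card_smul_one_iff hsq hone]
  exact and_congr_right fun ha => forall₂_congr fun g hg => eval_rowPoly_eq_zero_iff ha hg
end

section
/- Let G be a finite group of order 4t, let ρ be a normalized binary cocycle over G, let S ⊆ G∖{1}, and let x_d ∈ {0,1} for d ∈ S. Let N be the G × G matrix N(g,h) = ρ(g,h)·∏_{d∈S} M̄_d(g,h)^{x_d} and let M_ψ be the cocyclic matrix of ψ(g,h) = ρ(g,h)·∏_{d∈S} ∂_d(g,h)^{x_d}. Then N is obtained from M_ψ by negating exactly the rows g ∈ S with x_g = 1 (i.e., N(g,h) = (−1)^{x_g}·M_ψ(g,h) if g ∈ S and N(g,h) = M_ψ(g,h) otherwise); consequently, N is a Hadamard matrix if and only if M_ψ is a Hadamard matrix. -/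
open Matrix

/-- The generalized coboundary matrix `M̄_d`: the matrix of `∂_d` with row `d` negated. -/
def genCob {G : Type*} [Group G] [DecidableEq G] (d g h : G) : ℤ :=
  if g = d then -(elemCob d g h) else elemCob d g h

/-!
Negating row `d` of `∂_d` is multiplying entry `(g, h)` by `δ_d(g)`, so the product over `d ∈ S`
multiplies row `g` of `M_ψ` by `∏_{d ∈ S} δ_d(g)^{x_d}`, which is `(-1)^{x_g}` for `g ∈ S` and `1`
otherwise. Hence `N = D M_ψ` for a diagonal sign matrix `D` with `D² = 1`, and
`N Nᵀ = D (M_ψ M_ψᵀ) D` is a multiple of the identity exactly when `M_ψ M_ψᵀ` is.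
-/

theorem Matrix.mul_mul_transpose_eq_smul_one_iff {n R : Type*} [Fintype n] [DecidableEq n]
    [CommRing R] {D : Matrix n n R} (hD : Dᵀ * D = 1) (M : Matrix n n R) (c : R) :
    D * M * (D * M)ᵀ = c • 1 ↔ M * Mᵀ = c • 1 := by
  have hD' : D * Dᵀ = 1 := mul_eq_one_comm.mp hD
  rw [transpose_mul, show D * M * (Mᵀ * Dᵀ) = D * (M * Mᵀ) * Dᵀ by simp only [Matrix.mul_assoc]]
  constructor
  · intro h
    calc M * Mᵀ = (Dᵀ * D) * (M * Mᵀ) * (Dᵀ * D) := by rw [hD, Matrix.one_mul, Matrix.mul_one]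
      _ = Dᵀ * (D * (M * Mᵀ) * Dᵀ) * D := by simp only [Matrix.mul_assoc]
      _ = c • 1 := by rw [h, Matrix.mul_smul, Matrix.mul_one, Matrix.smul_mul, hD]
  · intro h
    rw [h, Matrix.mul_smul, Matrix.mul_one, Matrix.smul_mul, hD']

theorem Matrix.diagonal_transpose_mul_self {n R : Type*} [DecidableEq n] [Fintype n]
    [CommRing R] {ε : n → R} (hε : ∀ i, ε i * ε i = 1) :
    (diagonal ε)ᵀ * diagonal ε = 1 := by
  rw [diagonal_transpose, diagonal_mul_diagonal, ← diagonal_one]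
  exact congrArg diagonal (funext hε)

section Coboundary

variable {G : Type*} [DecidableEq G]

theorem genCob_eq_charMap_mul_elemCob [Group G] (d g h : G) :
    genCob d g h = charMap d g * elemCob d g h := by
  unfold genCob charMap
  split <;> ring

theorem prod_charMap_pow (S : Finset G) (x : G → ℕ) (g : G) :
    ∏ d ∈ S, charMap d g ^ x d = if g ∈ S then (-1 : ℤ) ^ x g else 1 := by
  refine (Finset.prod_congr rfl fun d _ => ?_).trans (Finset.prod_ite_eq S g fun d => (-1) ^ x d)
  rcases eq_or_ne g d with rfl | hgd
  · simp only [charMap, if_true]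
  · simp only [charMap, hgd, if_false, one_pow]

theorem prod_genCob_pow [Group G] (S : Finset G) (x : G → ℕ) (g h : G) :
    ∏ d ∈ S, genCob d g h ^ x d =
      (if g ∈ S then (-1 : ℤ) ^ x g else 1) * ∏ d ∈ S, elemCob d g h ^ x d := by
  simp only [genCob_eq_charMap_mul_elemCob, mul_pow, Finset.prod_mul_distrib, prod_charMap_pow]

end Coboundary

theorem genCob_matrix_vs_cocyclic_matrix_general {G : Type*} [Group G] [Fintype G] [DecidableEq G]
    (t : ℕ)
    (ρ : G → G → ℤ)
    (S : Finset G)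
    (x : G → ℕ)
    (N M : Matrix G G ℤ)
    (hN : N = Matrix.of fun g h : G => ρ g h * ∏ d ∈ S, genCob d g h ^ x d)
    (hM : M = Matrix.of fun g h : G => ρ g h * ∏ d ∈ S, elemCob d g h ^ x d) :
    (∀ g h : G, N g h = (if g ∈ S then (-1 : ℤ) ^ x g else 1) * M g h) ∧
      (N * Nᵀ = (4 * t : ℤ) • (1 : Matrix G G ℤ) ↔
        M * Mᵀ = (4 * t : ℤ) • (1 : Matrix G G ℤ)) := by
  set ε : G → ℤ := fun g => if g ∈ S then (-1 : ℤ) ^ x g else 1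
  have hrow : ∀ g h, N g h = ε g * M g h := fun g h => by
    rw [hN, hM, of_apply, of_apply, prod_genCob_pow]
    ring
  have hsq : ∀ g, ε g * ε g = 1 := fun g => by
    simp only [ε]
    split_ifs
    · rw [← mul_pow, mul_neg_one, neg_neg, one_pow]
    · exact one_mul 1
  have hND : N = diagonal ε * M := by
    ext g h
    rw [diagonal_mul, hrow]
  rw [hND]
  exact ⟨fun g h => by rw [diagonal_mul],
    mul_mul_transpose_eq_smul_one_iff (diagonal_transpose_mul_self hsq) M _⟩

/-- the matrix built from generalized coboundary matrices is obtained from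
the cocyclic matrix `M_ψ` by negating exactly the rows `g ∈ S` with `x_g = 1`; hence one
is Hadamard iff the other is. -/
theorem genCob_matrix_vs_cocyclic_matrix {G : Type*} [Group G] [Fintype G] [DecidableEq G]
    (t : ℕ) (hcard : Fintype.card G = 4 * t)
    (ρ : G → G → ℤ)
    (hpm : ∀ g h : G, ρ g h = 1 ∨ ρ g h = -1)
    (hcoc : ∀ g h k : G, ρ g h * ρ (g * h) k = ρ h k * ρ g (h * k))
    (hnorm : ∀ g : G, ρ 1 g = 1 ∧ ρ g 1 = 1)
    (S : Finset G) (hS : (1 : G) ∉ S)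
    (x : G → ℕ) (hx : ∀ d, x d = 0 ∨ x d = 1)
    (N M : Matrix G G ℤ)
    (hN : N = Matrix.of fun g h : G => ρ g h * ∏ d ∈ S, genCob d g h ^ x d)
    (hM : M = Matrix.of fun g h : G => ρ g h * ∏ d ∈ S, elemCob d g h ^ x d) :
    (∀ g h : G, N g h = (if g ∈ S then (-1 : ℤ) ^ x g else 1) * M g h) ∧
      (N * Nᵀ = (4 * t : ℤ) • (1 : Matrix G G ℤ) ↔
        M * Mᵀ = (4 * t : ℤ) • (1 : Matrix G G ℤ)) :=
  genCob_matrix_vs_cocyclic_matrix_general t ρ S x N M hN hM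
end
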